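/- arXiv:2212.11325 — 3 statements merged into one kernel-verified Lean document; each statement's English description precedes it below -/
import Mathlib

section
/- Let f : (Fin n → ZMod 2) → ZMod 2 be a Boolean function with support Ω_f = {w | f w = 1}. Then the number of elements w ∈ Z_2^n such that the Walsh coefficient W_f(w) = Σ_{x} (−1)^{w·x} f(x) equals |Ω_f| is exactly 2^{n − d}, where d is the dimension of the ZMod 2-linear span of Ω_f inside Fin n → ZMod 2. -/
/-!
On the support, `W_f(w) = ∑_{x ∈ Ω_f} (-1)^{w·x}` is a sum of `|Ω_f|` signs, so it equals `|Ω_f|`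
exactly when `w` is orthogonal to every point of `Ω_f`, i.e. to its span. The dot product is
nondegenerate, so this orthogonal complement has dimension `n - d` and hence `2^(n - d)` elements.
-/

/-- The Walsh coefficient of a Boolean function `f` at `w`:
`W_f(w) = Σ_{x ∈ Z_2^n} (−1)^{w·x} f(x)`, with `f x` interpreted as `0` or `1` in `ℝ`. -/
noncomputable def walsh {n : ℕ} (f : (Fin n → ZMod 2) → ZMod 2) (w : Fin n → ZMod 2) : ℝ :=
  ∑ x : Fin n → ZMod 2, (-1 : ℝ) ^ (∑ i, w i * x i).val * ((f x).val : ℝ)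

open Matrix Module Submodule

section DotProductOrthogonal

variable {K ι : Type*} [Field K] [Fintype ι]

theorem finrank_toBilin'_one_orthogonal [DecidableEq ι] (W : Submodule K (ι → K)) :
    finrank K ((1 : Matrix ι ι K).toBilin'.orthogonal W) = Fintype.card ι - finrank K W := by
  rw [LinearMap.BilinForm.finrank_orthogonal
    (nondegenerate_toBilin'_iff.mpr (nondegenerate_of_det_ne_zero (by simp))),
    finrank_fintype_fun_eq_card]

theorem mem_toBilin'_one_orthogonal_span_iff [DecidableEq ι] {s : Set (ι → K)} {w : ι → K} :
    w ∈ (1 : Matrix ι ι K).toBilin'.orthogonal (span K s) ↔ ∀ x ∈ s, w ⬝ᵥ x = 0 := by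
  have h := span_le (s := s) (p := LinearMap.ker ((1 : Matrix ι ι K).toBilin'.flip w))
  simp only [SetLike.le_def, LinearMap.mem_ker, Set.subset_def, SetLike.mem_coe] at h
  simpa [LinearMap.BilinForm.mem_orthogonal_iff, toBilin'_apply', dotProduct_comm _ w] using h

theorem ncard_setOf_forall_dotProduct_eq_zero (s : Set (ι → K)) :
    {w : ι → K | ∀ x ∈ s, w ⬝ᵥ x = 0}.ncard =
      Nat.card K ^ (Fintype.card ι - finrank K (span K s)) := by
  classical
  have hset : {w : ι → K | ∀ x ∈ s, w ⬝ᵥ x = 0} =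
      (1 : Matrix ι ι K).toBilin'.orthogonal (span K s) :=
    Set.ext fun _ => mem_toBilin'_one_orthogonal_span_iff.symm
  rw [hset, ← finrank_toBilin'_one_orthogonal, ← natCard_eq_pow_finrank]
  rfl

end DotProductOrthogonal

theorem ZMod.two_eq_zero_or_one (a : ZMod 2) : a = 0 ∨ a = 1 := by
  revert a; decide

theorem neg_one_pow_val_le_one (a : ZMod 2) : (-1 : ℝ) ^ a.val ≤ 1 := by
  rcases ZMod.two_eq_zero_or_one a with rfl | rfl <;> norm_num [ZMod.val_one]

theorem neg_one_pow_val_eq_one_iff {a : ZMod 2} : (-1 : ℝ) ^ a.val = 1 ↔ a = 0 := by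
  rcases ZMod.two_eq_zero_or_one a with rfl | rfl <;> norm_num [ZMod.val_one]

open Finset in
theorem Finset.sum_neg_one_pow_val_eq_card_iff {α : Type*} (s : Finset α) (g : α → ZMod 2) :
    ∑ x ∈ s, (-1 : ℝ) ^ (g x).val = #s ↔ ∀ x ∈ s, g x = 0 := by
  rw [card_eq_sum_ones, Nat.cast_sum, Nat.cast_one,
    sum_eq_sum_iff_of_le fun x _ => neg_one_pow_val_le_one (g x)]
  simp only [neg_one_pow_val_eq_one_iff]

theorem walsh_eq_sum_support {n : ℕ} (f : (Fin n → ZMod 2) → ZMod 2) (w : Fin n → ZMod 2) :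
    walsh f w = ∑ x ∈ {x | f x = 1}, (-1 : ℝ) ^ (w ⬝ᵥ x).val := by
  rw [walsh, Finset.sum_filter]
  refine Finset.sum_congr rfl fun x _ => ?_
  rcases ZMod.two_eq_zero_or_one (f x) with h | h <;> simp [h, ZMod.val_one, dotProduct]

theorem walsh_eq_ncard_support_iff {n : ℕ} (f : (Fin n → ZMod 2) → ZMod 2)
    (w : Fin n → ZMod 2) :
    walsh f w = ({x | f x = 1}.ncard : ℝ) ↔ ∀ x ∈ {x | f x = 1}, w ⬝ᵥ x = 0 := by
  rw [walsh_eq_sum_support, ← Finset.coe_filter_univ, Set.ncard_coe_finset,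
    Finset.sum_neg_one_pow_val_eq_card_iff]
  simp

theorem card_walsh_eq_card_support {n : ℕ} (f : (Fin n → ZMod 2) → ZMod 2) :
    {w : Fin n → ZMod 2 | walsh f w = ({w : Fin n → ZMod 2 | f w = 1}.ncard : ℝ)}.ncard =
      2 ^ (n - Module.finrank (ZMod 2)
        (Submodule.span (ZMod 2) {w : Fin n → ZMod 2 | f w = 1})) := by
  simp_rw [walsh_eq_ncard_support_iff]
  rw [ncard_setOf_forall_dotProduct_eq_zero, Nat.card_zmod, Fintype.card_fin]
end

section
/- Let f : (Fin n → ZMod 2) → ZMod 2 be a Boolean function and let A be the 2^n × 2^n rational (or real) matrix indexed by Z_2^n with entries A_{u,v} = f(u + v) (interpreted as 0 or 1). Then the rank of A equals the cardinality of the set {w ∈ Z_2^n | Σ_{x} (−1)^{w·x} f(x) ≠ 0}, i.e. the number of nonzero Walsh coefficients of f. -/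
/-!
The Walsh matrix `H w x = (-1)^{w·x}` satisfies `H * H = 2^n • 1` and diagonalises every matrix
of the form `g (u - v)`: `H * circulant g = diagonal (walshTransform g) * H`. Since `u + v = u - v`
in `Z_2^n`, the matrix `A` is such a circulant, so over a field where `2 ≠ 0` its rank is that of
the diagonal matrix of Walsh coefficients.
-/

open Finset Matrix

lemma AddChar.map_sum_eq_prod {ι A M : Type*} [AddCommMonoid A] [CommMonoid M]
    (ψ : AddChar A M) (s : Finset ι) (a : ι → A) : ψ (∑ i ∈ s, a i) = ∏ i ∈ s, ψ (a i) := by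
  classical
  induction s using Finset.induction_on with
  | empty => simp
  | insert i s hi ih => rw [sum_insert hi, prod_insert hi, AddChar.map_add_eq_mul, ih]

section Walsh

variable {ι R : Type*} [Fintype ι] [DecidableEq ι] [CommRing R]

variable (R) in
noncomputable def signChar : AddChar (ZMod 2) R :=
  AddChar.zmodChar 2 (by norm_num : (-1 : R) ^ 2 = 1)

lemma signChar_apply (a : ZMod 2) : signChar R a = (-1) ^ a.val := rfl

lemma sum_signChar_mul (a : ZMod 2) : ∑ t, signChar R (a * t) = if a = 0 then 2 else 0 := by
  obtain rfl | rfl : a = 0 ∨ a = 1 := by decide +revert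
  · simp
  · rw [show (univ : Finset (ZMod 2)) = {0, 1} by decide, sum_pair zero_ne_one]
    simp [signChar_apply, ZMod.val_one]

lemma sum_signChar_dotProduct (c : ι → ZMod 2) :
    ∑ x, signChar R (c ⬝ᵥ x) = if c = 0 then 2 ^ Fintype.card ι else 0 := by
  calc ∑ x, signChar R (c ⬝ᵥ x) = ∏ i, ∑ t, signChar R (c i * t) := by
        simp only [dotProduct, AddChar.map_sum_eq_prod, Fintype.prod_sum]
    _ = if c = 0 then 2 ^ Fintype.card ι else 0 := by
        simp only [sum_signChar_mul, Fintype.prod_ite_zero, funext_iff, Pi.zero_apply, prod_const,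
          card_univ]

variable (ι R) in
noncomputable def walshMatrix : Matrix (ι → ZMod 2) (ι → ZMod 2) R :=
  of fun w x => signChar R (w ⬝ᵥ x)

noncomputable def walshTransform (g : (ι → ZMod 2) → R) (w : ι → ZMod 2) : R :=
  ∑ x, signChar R (w ⬝ᵥ x) * g x

lemma walshMatrix_mul_self :
    walshMatrix ι R * walshMatrix ι R = (2 ^ Fintype.card ι : R) • 1 := by
  ext w w'
  have hsum : w + w' = 0 ↔ w = w' := by rw [add_eq_zero_iff_eq_neg, ZModModule.neg_eq_self]
  simp only [walshMatrix, mul_apply, of_apply, ← AddChar.map_add_eq_mul, dotProduct_comm _ w',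
    ← add_dotProduct, sum_signChar_dotProduct, hsum, Matrix.smul_apply, one_apply, smul_eq_mul,
    mul_ite, mul_one, mul_zero]

lemma isUnit_det_walshMatrix (h2 : IsUnit (2 : R)) : IsUnit (walshMatrix ι R).det := by
  have hdet := congrArg det (walshMatrix_mul_self (ι := ι) (R := R))
  rw [det_mul, det_smul, det_one, mul_one] at hdet
  exact isUnit_of_mul_isUnit_left (hdet ▸ (h2.pow _).pow _)

lemma walshMatrix_mul_circulant (g : (ι → ZMod 2) → R) :
    walshMatrix ι R * circulant g = diagonal (walshTransform g) * walshMatrix ι R := by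
  ext w v
  rw [mul_apply, diagonal_mul, walshTransform, sum_mul, ← Equiv.sum_comp (Equiv.addRight v)]
  refine sum_congr rfl fun x _ => ?_
  simp only [walshMatrix, of_apply, circulant_apply, Equiv.coe_addRight, add_sub_cancel_right,
    dotProduct_add, AddChar.map_add_eq_mul]
  ring

theorem rank_circulant_eq_ncard_walshTransform_ne_zero {K : Type*} [Field K] (h2 : (2 : K) ≠ 0)
    (g : (ι → ZMod 2) → K) : (circulant g).rank = {w | walshTransform g w ≠ 0}.ncard := by
  classical
  have hH : IsUnit (walshMatrix ι K).det := isUnit_det_walshMatrix h2.isUnit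
  calc (circulant g).rank = (walshMatrix ι K * circulant g).rank :=
        (rank_mul_eq_right_of_isUnit_det _ _ hH).symm
    _ = (diagonal (walshTransform g) * walshMatrix ι K).rank := by rw [walshMatrix_mul_circulant]
    _ = (diagonal (walshTransform g)).rank := rank_mul_eq_left_of_isUnit_det _ _ hH
    _ = {w | walshTransform g w ≠ 0}.ncard := by
        rw [rank_diagonal, ← Nat.card_eq_fintype_card, ← Nat.card_coe_set_eq]; rfl

end Walsh

lemma walsh_eq_walshTransform {n : ℕ} (f : (Fin n → ZMod 2) → ZMod 2) :
    walsh f = walshTransform fun x => ((f x).val : ℝ) := rfl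

theorem rank_eq_card_nonzero_walsh {n : ℕ} (f : (Fin n → ZMod 2) → ZMod 2)
    (A : Matrix (Fin n → ZMod 2) (Fin n → ZMod 2) ℝ)
    (hA : ∀ u v, A u v = ((f (u + v)).val : ℝ)) :
    A.rank = {w : Fin n → ZMod 2 | walsh f w ≠ 0}.ncard := by
  have hA' : A = circulant fun x => ((f x).val : ℝ) := by
    ext u v
    rw [hA, circulant_apply, ZModModule.sub_eq_add]
  rw [hA', rank_circulant_eq_ncard_walshTransform_ne_zero two_ne_zero, walsh_eq_walshTransform]
end

section
/- Let G be a strongly regular graph with parameters (v, k, λ, μ) on a finite vertex type V, let A be its real adjacency matrix, and suppose x : V → ℝ is a nonzero vector with A.mulVec x = θ • x for some real θ and with Σ_{v ∈ V} x(v) = 0 (x is orthogonal to the all-ones vector). Then θ satisfies the quadratic equation θ² + (μ − λ)·θ + (μ − k) = 0; in particular every eigenvalue of A other than k is one of θ₁ = ((λ−μ) + √((λ−μ)² + 4(k−μ)))/2 or θ₂ = ((λ−μ) − √((λ−μ)² + 4(k−μ)))/2. -/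
/-! The spectral identity `A² = k I + λ A + μ (J - I - A)` of a strongly regular graph collapses,
on vectors orthogonal to the all-ones vector (which `J` kills), to the scalar equation
`θ² = k + λ θ - μ (1 + θ)` for every eigenvalue `θ`; the two roots are then read off. -/

open Matrix

namespace SimpleGraph

variable {V α : Type*} [Fintype V] [DecidableEq V] {G : SimpleGraph V} [DecidableRel G.Adj]

theorem compl_adjMatrix_mulVec_of_sum_eq_zero [Ring α] {x : V → α} (hsum : ∑ u, x u = 0) :
    Gᶜ.adjMatrix α *ᵥ x = -x - G.adjMatrix α *ᵥ x := by
  classical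
  have hJ : (of 1 : Matrix V V α) *ᵥ x = 0 := by
    ext; simp [mulVec, dotProduct, hsum]
  rw [← G.one_add_adjMatrix_add_compl_adjMatrix_eq_of_one α, add_mulVec, add_mulVec, one_mulVec,
    compl_adjMatrix_eq_adjMatrix_compl] at hJ
  rw [eq_sub_iff_add_eq, eq_neg_iff_add_eq_zero, ← hJ]
  abel

theorem IsSRGWith.eigenvalue_quadratic_of_sum_eq_zero [CommRing α] [NoZeroDivisors α]
    {n k ℓ μ : ℕ} (h : G.IsSRGWith n k ℓ μ) {θ : α} {x : V → α} (hx : x ≠ 0)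
    (hev : G.adjMatrix α *ᵥ x = θ • x) (hsum : ∑ u, x u = 0) :
    θ ^ 2 + ((μ : α) - ℓ) * θ + ((μ : α) - k) = 0 := by
  have hsq := congrArg (· *ᵥ x) h.matrix_eq
  simp only [sq, ← mulVec_mulVec, hev, mulVec_smul, add_mulVec, smul_mulVec, one_mulVec,
    compl_adjMatrix_mulVec_of_sum_eq_zero hsum] at hsq
  have hzero : (θ ^ 2 + ((μ : α) - ℓ) * θ + ((μ : α) - k)) • x = 0 := by
    rw [← sub_eq_zero.mpr hsq]
    module
  exact (smul_eq_zero.mp hzero).resolve_right hx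

end SimpleGraph

theorem Real.eq_or_eq_of_sq_sub_mul_sub_eq_zero {θ p q : ℝ} (h : θ ^ 2 - p * θ - q = 0) :
    θ = (p + √(p ^ 2 + 4 * q)) / 2 ∨ θ = (p - √(p ^ 2 + 4 * q)) / 2 := by
  have hdisc : p ^ 2 + 4 * q = (2 * θ - p) ^ 2 := by linear_combination -4 * h
  rw [hdisc, Real.sqrt_sq_eq_abs]
  rcases abs_choice (2 * θ - p) with habs | habs <;> rw [habs]
  · left; ring
  · right; ring

theorem srg_eigenvalue_quadratic {V : Type*} [Fintype V] (G : SimpleGraph V)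
    [DecidableRel G.Adj] (v k lam mu : ℕ) (h : G.IsSRGWith v k lam mu)
    (θ : ℝ) (x : V → ℝ) (hx : x ≠ 0)
    (hev : (G.adjMatrix ℝ).mulVec x = θ • x)
    (hsum : ∑ u : V, x u = 0) :
    θ ^ 2 + ((mu : ℝ) - (lam : ℝ)) * θ + ((mu : ℝ) - (k : ℝ)) = 0 ∧
      (θ = (((lam : ℝ) - (mu : ℝ)) +
          Real.sqrt (((lam : ℝ) - (mu : ℝ)) ^ 2 + 4 * ((k : ℝ) - (mu : ℝ)))) / 2 ∨
       θ = (((lam : ℝ) - (mu : ℝ)) -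
          Real.sqrt (((lam : ℝ) - (mu : ℝ)) ^ 2 + 4 * ((k : ℝ) - (mu : ℝ)))) / 2) := by
  classical
  have hquad := h.eigenvalue_quadratic_of_sum_eq_zero hx hev hsum
  exact ⟨hquad, Real.eq_or_eq_of_sq_sub_mul_sub_eq_zero (by linear_combination hquad)⟩
end
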